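/- Let h:[0,b]→[0,∞) be concave with positive integral, β>0, and fix x₁∈(0,b). Then there exist γ<δ and c>0 with 0≤γ≤x₁≤b≤δ such that the function g(t)=c(δ-t) satisfies g(x₁)=h(x₁), ∫_γ^δ g(t)^β dt = ∫_0^b h(t)^β dt, and ∫_{x₁}^δ g(t)^β dt = ∫_{x₁}^b h(t)^β dt. -/

import Mathlib

/-!
Put `g t = c * (δ - t)`. The conditions `g x₁ = h x₁` and `∫_{x₁}^δ g^β = ∫_{x₁}^b h^β` determine
`c` and `δ`, and `b ≤ δ` because `h` lies above its chord from `(x₁, h x₁)` to `(b, 0)`.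
If `h` exceeded `g` at some point left of `x₁`, concavity would force `h < g` on `(x₁, b]`, hence
`∫_{x₁}^b h^β < ∫_{x₁}^δ g^β`, which is absurd; so `h ≤ g` on `[0, x₁]`. Consequently
`∫_{x₁}^δ g^β ≤ ∫_0^b h^β ≤ ∫_0^δ g^β`, and the intermediate value theorem provides `γ ∈ [0, x₁]`.
-/

open MeasureTheory Set

theorem ConcaveOn.sub_mul_add_sub_mul_le {s : Set ℝ} {f : ℝ → ℝ} (hf : ConcaveOn ℝ s f)
    {x y z : ℝ} (hx : x ∈ s) (hz : z ∈ s) (hxy : x ≤ y) (hyz : y ≤ z) :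
    (z - y) * f x + (y - x) * f z ≤ (z - x) * f y := by
  rcases hxy.eq_or_lt with rfl | hxy
  · simp
  rcases hyz.eq_or_lt with rfl | hyz
  · simp
  have hslope := hf.slope_anti_adjacent hx hz hxy hyz
  rw [div_le_div_iff₀ (by linarith) (by linarith)] at hslope
  linear_combination hslope

theorem ConcaveOn.le_two_mul_apply_midpoint {a b : ℝ} {f : ℝ → ℝ}
    (hf : ConcaveOn ℝ (Icc a b) f) (ha : 0 ≤ f a) (hb : 0 ≤ f b) {t : ℝ} (ht : t ∈ Icc a b) :
    f t ≤ 2 * f ((a + b) / 2) := by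
  rcases (ht.1.trans ht.2).eq_or_lt with rfl | hab
  · obtain rfl : t = a := le_antisymm ht.2 ht.1
    rw [show (t + t) / 2 = t by ring]
    linarith
  have hA : a ∈ Icc a b := left_mem_Icc.2 hab.le
  have hB : b ∈ Icc a b := right_mem_Icc.2 hab.le
  set m := (a + b) / 2 with hm
  have hfm : 0 ≤ f m := by
    have := hf.sub_mul_add_sub_mul_le hA hB (x := a) (y := m) (by linarith) (by linarith)
    nlinarith
  rcases le_total t m with htm | hmt
  · have := hf.sub_mul_add_sub_mul_le ht hB htm (by linarith)
    nlinarith [ht.1]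
  · have := hf.sub_mul_add_sub_mul_le hA ht (by linarith) hmt
    nlinarith [ht.2]

theorem ConcaveOn.intervalIntegrable_rpow {a b β u v : ℝ} {f : ℝ → ℝ}
    (hf : ConcaveOn ℝ (Icc a b) f) (hnn : ∀ t ∈ Icc a b, 0 ≤ f t) (hβ : 0 ≤ β)
    (hu : u ∈ Icc a b) (hv : v ∈ Icc a b) :
    IntervalIntegrable (fun t => f t ^ β) volume u v := by
  have hab : a ≤ b := hu.1.trans hu.2
  have hcont : ContinuousOn (fun t => f t ^ β) (Ioo a b) := by
    have := hf.continuousOn_interior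
    rw [interior_Icc] at this
    exact this.rpow_const fun _ _ => Or.inr hβ
  have hbound : ∀ t ∈ Ioo a b, ‖f t ^ β‖ ≤ (2 * f ((a + b) / 2)) ^ β := by
    intro t ht
    have ht' := Ioo_subset_Icc_self ht
    rw [Real.norm_of_nonneg (Real.rpow_nonneg (hnn t ht') β)]
    exact Real.rpow_le_rpow (hnn t ht') (hf.le_two_mul_apply_midpoint
      (hnn a (left_mem_Icc.2 hab)) (hnn b (right_mem_Icc.2 hab)) ht') hβ
  have hab_int : IntervalIntegrable (fun t => f t ^ β) volume a b := by
    rw [intervalIntegrable_iff_integrableOn_Ioo_of_le hab]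
    refine IntegrableOn.of_bound measure_Ioo_lt_top
      (hcont.aestronglyMeasurable measurableSet_Ioo) ((2 * f ((a + b) / 2)) ^ β) ?_
    exact (ae_restrict_iff' measurableSet_Ioo).2 (ae_of_all _ hbound)
  rw [← uIcc_of_le hab] at hu hv
  exact hab_int.mono_set (uIcc_subset_uIcc hu hv)

theorem integral_mul_sub_rpow {β c d u : ℝ} (hβ : -1 < β) (hc : 0 ≤ c) (hu : u ≤ d) :
    ∫ t in u..d, (c * (d - t)) ^ β = (c * (d - u)) ^ β * (d - u) / (β + 1) := by
  have hβ1 : β + 1 ≠ 0 := by linarith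
  have hsub : ∫ t in u..d, (c * (d - t)) ^ β = ∫ s in (0 : ℝ)..(d - u), (c * s) ^ β := by
    simpa using intervalIntegral.integral_comp_sub_left (fun s => (c * s) ^ β) d (a := u) (b := d)
  rw [hsub, intervalIntegral.integral_congr (g := fun s => c ^ β * s ^ β),
    intervalIntegral.integral_const_mul, integral_rpow (Or.inl hβ),
    Real.zero_rpow hβ1, Real.rpow_add_one' (by linarith) hβ1, Real.mul_rpow hc (by linarith)]
  · ring
  · intro s hs
    rw [uIcc_of_le (by linarith)] at hs
    exact Real.mul_rpow hc hs.1

theorem ConcaveOn.rpow_mul_div_le_integral {a b β x : ℝ} {f : ℝ → ℝ}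
    (hf : ConcaveOn ℝ (Icc a b) f) (hnn : ∀ t ∈ Icc a b, 0 ≤ f t) (hβ : 0 ≤ β)
    (hx : x ∈ Ico a b) :
    f x ^ β * (b - x) / (β + 1) ≤ ∫ t in x..b, f t ^ β := by
  have hbx : 0 < b - x := sub_pos.2 hx.2
  have hxI : x ∈ Icc a b := Ico_subset_Icc_self hx
  have hbI : b ∈ Icc a b := right_mem_Icc.2 (hx.1.trans hx.2.le)
  set c := f x / (b - x)
  have hc : 0 ≤ c := div_nonneg (hnn x hxI) hbx.le
  have hchord : ∀ t ∈ Icc x b, c * (b - t) ≤ f t := by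
    intro t ht
    have := hf.sub_mul_add_sub_mul_le hxI hbI ht.1 ht.2
    rw [div_mul_eq_mul_div, div_le_iff₀ hbx]
    nlinarith [hnn b hbI, ht.1]
  calc f x ^ β * (b - x) / (β + 1) = ∫ t in x..b, (c * (b - t)) ^ β := by
        rw [integral_mul_sub_rpow (by linarith) hc hx.2.le, div_mul_cancel₀ _ hbx.ne']
    _ ≤ ∫ t in x..b, f t ^ β := by
        refine intervalIntegral.integral_mono_on hx.2.le ?_
          (hf.intervalIntegrable_rpow hnn hβ hxI hbI) fun t ht =>
            Real.rpow_le_rpow (mul_nonneg hc (by linarith [ht.2])) (hchord t ht) hβ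
        exact (Continuous.intervalIntegrable (by fun_prop) _ _)

theorem ConcaveOn.lt_mul_sub_of_mul_sub_lt {s : Set ℝ} {f : ℝ → ℝ} (hf : ConcaveOn ℝ s f)
    {c δ t x y : ℝ} (ht : t ∈ s) (hy : y ∈ s) (htx : t < x) (hxy : x < y)
    (hlt : c * (δ - t) < f t) (heq : f x = c * (δ - x)) : f y < c * (δ - y) := by
  have := hf.sub_mul_add_sub_mul_le ht hy htx.le hxy.le
  rw [heq] at this
  by_contra! hge
  nlinarith [mul_pos (sub_pos.2 hxy) (sub_pos.2 hlt),
    mul_nonneg (sub_pos.2 htx).le (sub_nonneg.2 hge)]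

theorem ConcaveOn.le_mul_sub_of_integral_rpow_le {a b β c δ x : ℝ} {f : ℝ → ℝ}
    (hf : ConcaveOn ℝ (Icc a b) f) (hnn : ∀ t ∈ Icc a b, 0 ≤ f t) (hβ : 0 < β)
    (hx : x ∈ Ioo a b) (heq : f x = c * (δ - x))
    (hint : ∫ t in x..b, (c * (δ - t)) ^ β ≤ ∫ t in x..b, f t ^ β) :
    ∀ t ∈ Icc a x, f t ≤ c * (δ - t) := by
  intro t ht
  by_contra! hlt
  have htx : t < x := ht.2.lt_of_ne (by rintro rfl; exact hlt.ne' heq)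
  have hbelow : ∀ y ∈ Ioc x b, f y ^ β < (c * (δ - y)) ^ β := fun y hy =>
    have hyI : y ∈ Icc a b := ⟨hx.1.le.trans hy.1.le, hy.2⟩
    Real.rpow_lt_rpow (hnn y hyI)
      (hf.lt_mul_sub_of_mul_sub_lt ⟨ht.1, ht.2.trans hx.2.le⟩ hyI htx hy.1 hlt heq) hβ
  refine hint.not_gt
    (intervalIntegral.integral_lt_integral_of_ae_le_of_measure_setOfPred_lt_ne_zero hx.2.le
      (hf.intervalIntegrable_rpow hnn hβ.le (Ioo_subset_Icc_self hx)
        (right_mem_Icc.2 (hx.1.trans hx.2).le))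
      (Continuous.intervalIntegrable (by fun_prop (disch := exact hβ.le)) _ _)
      ((ae_restrict_iff' measurableSet_Ioc).2 (ae_of_all _ fun y hy => (hbelow y hy).le)) ?_)
  refine pos_iff_ne_zero.1 ?_
  calc 0 < volume (Ioc x b) := by simp [hx.2]
    _ = volume.restrict (Ioc x b) (Ioc x b) := (Measure.restrict_apply_self _ _).symm
    _ ≤ _ := measure_mono hbelow

theorem exists_mem_Icc_integral_eq {g : ℝ → ℝ} (hg : Continuous g) {a x δ T : ℝ} (hax : a ≤ x)
    (hT : T ∈ Icc (∫ t in x..δ, g t) (∫ t in a..δ, g t)) :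
    ∃ γ ∈ Icc a x, ∫ t in γ..δ, g t = T := by
  have hcont : Continuous fun u => ∫ t in u..δ, g t := by
    simp only [intervalIntegral.integral_symm δ]
    exact (intervalIntegral.continuous_primitive (fun _ _ => hg.intervalIntegrable _ _) δ).neg
  exact intermediate_value_Icc' hax hcont.continuousOn hT

theorem exists_mul_sub_integral_rpow_eq {β b x H A : ℝ} (hβ : -1 < β) (hH : 0 < H)
    (hxb : x < b) (hA : H ^ β * (b - x) / (β + 1) ≤ A) :
    ∃ δ c : ℝ, b ≤ δ ∧ 0 < c ∧ c * (δ - x) = H ∧ ∫ t in x..δ, (c * (δ - t)) ^ β = A := by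
  have hβ1 : 0 < β + 1 := by linarith
  have hHβ : 0 < H ^ β := Real.rpow_pos_of_pos hH β
  set L := (β + 1) * A / H ^ β
  have hbL : b - x ≤ L := by
    rw [le_div_iff₀ hHβ]
    rw [div_le_iff₀ hβ1] at hA
    linarith
  have hL : 0 < L := by linarith
  have hcL : H / L * (x + L - x) = H := by field_simp; ring
  refine ⟨x + L, H / L, by linarith, by positivity, hcL, ?_⟩
  rw [integral_mul_sub_rpow hβ (by positivity) (by linarith), hcL]
  simp only [L]
  field_simp
  ring

theorem ConcaveOn.integral_rpow_le_integral_mul_sub_rpow {a b β c δ x : ℝ} {f : ℝ → ℝ}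
    (hf : ConcaveOn ℝ (Icc a b) f) (hnn : ∀ t ∈ Icc a b, 0 ≤ f t) (hβ : 0 < β)
    (hx : x ∈ Ioo a b) (hc : 0 ≤ c) (hbδ : b ≤ δ) (heq : f x = c * (δ - x))
    (hint : ∫ t in x..δ, (c * (δ - t)) ^ β = ∫ t in x..b, f t ^ β) :
    ∫ t in a..b, f t ^ β ≤ ∫ t in a..δ, (c * (δ - t)) ^ β := by
  have haI : a ∈ Icc a b := left_mem_Icc.2 (hx.1.trans hx.2).le
  have hxI : x ∈ Icc a b := Ioo_subset_Icc_self hx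
  have hg : Continuous fun t => (c * (δ - t)) ^ β := by fun_prop (disch := exact hβ.le)
  have hle : ∀ t ∈ Icc a x, f t ≤ c * (δ - t) := by
    refine hf.le_mul_sub_of_integral_rpow_le hnn hβ hx heq (hint ▸ ?_)
    refine intervalIntegral.integral_mono_interval le_rfl hx.2.le hbδ ?_ (hg.intervalIntegrable _ _)
    refine (ae_restrict_iff' measurableSet_Ioc).2 (ae_of_all _ fun t ht => ?_)
    exact Real.rpow_nonneg (mul_nonneg hc (by linarith [ht.2])) β
  rw [← intervalIntegral.integral_add_adjacent_intervals
      (hf.intervalIntegrable_rpow hnn hβ.le haI hxI)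
      (hf.intervalIntegrable_rpow hnn hβ.le hxI (right_mem_Icc.2 haI.2)),
    ← intervalIntegral.integral_add_adjacent_intervals (hg.intervalIntegrable a x)
      (hg.intervalIntegrable x δ), hint]
  refine add_le_add_left (intervalIntegral.integral_mono_on hx.1.le
    (hf.intervalIntegrable_rpow hnn hβ.le haI hxI) (hg.intervalIntegrable _ _) fun t ht => ?_) _
  exact Real.rpow_le_rpow (hnn t ⟨ht.1, ht.2.trans hx.2.le⟩) (hle t ht) hβ.le

theorem stmt_16_general (b β x₁ : ℝ) (h : ℝ → ℝ) (hb : 0 < b) (hβ : 0 < β)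
    (hx₁ : x₁ ∈ Set.Ioo 0 b)
    (hconc : ConcaveOn ℝ (Set.Icc 0 b) h)
    (hnn : ∀ t ∈ Set.Icc (0 : ℝ) b, 0 ≤ h t)
    (hsupp : ∀ t ∈ Set.Ioo (0 : ℝ) b, 0 < h t) :
    ∃ γ δ c : ℝ, γ < δ ∧ 0 < c ∧ 0 ≤ γ ∧ γ ≤ x₁ ∧ x₁ ≤ b ∧ b ≤ δ ∧
      c * (δ - x₁) = h x₁ ∧
      (∫ t in γ..δ, (c * (δ - t)) ^ β) = (∫ t in (0 : ℝ)..b, h t ^ β) ∧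
      (∫ t in x₁..δ, (c * (δ - t)) ^ β) = (∫ t in x₁..b, h t ^ β) := by
  obtain ⟨hx0, hxb⟩ := hx₁
  have hx₁I : x₁ ∈ Icc 0 b := ⟨hx0.le, hxb.le⟩
  obtain ⟨δ, c, hbδ, hc, hgx, hgA⟩ := exists_mul_sub_integral_rpow_eq (by linarith)
    (hsupp x₁ ⟨hx0, hxb⟩) hxb (hconc.rpow_mul_div_le_integral hnn hβ.le ⟨hx0.le, hxb⟩)
  have hlower : ∫ t in x₁..δ, (c * (δ - t)) ^ β ≤ ∫ t in (0 : ℝ)..b, h t ^ β := by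
    rw [hgA, ← intervalIntegral.integral_add_adjacent_intervals
      (hconc.intervalIntegrable_rpow hnn hβ.le (left_mem_Icc.2 hb.le) hx₁I)
      (hconc.intervalIntegrable_rpow hnn hβ.le hx₁I (right_mem_Icc.2 hb.le)),
      le_add_iff_nonneg_left]
    exact intervalIntegral.integral_nonneg hx0.le fun t ht =>
      Real.rpow_nonneg (hnn t ⟨ht.1, ht.2.trans hxb.le⟩) β
  have hupper := hconc.integral_rpow_le_integral_mul_sub_rpow hnn hβ ⟨hx0, hxb⟩ hc.le hbδ
    hgx.symm hgA
  obtain ⟨γ, hγ, hγT⟩ := exists_mem_Icc_integral_eq (by fun_prop (disch := exact hβ.le))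
    hx0.le ⟨hlower, hupper⟩
  exact ⟨γ, δ, c, by linarith [hγ.2], hc, hγ.1, hγ.2, hxb.le, hbδ, hgx, hγT, hgA⟩

theorem stmt_16 (b β x₁ : ℝ) (h : ℝ → ℝ) (hb : 0 < b) (hβ : 0 < β)
    (hx₁ : x₁ ∈ Set.Ioo 0 b)
    (hconc : ConcaveOn ℝ (Set.Icc 0 b) h)
    (hnn : ∀ t ∈ Set.Icc (0 : ℝ) b, 0 ≤ h t)
    (hsupp : ∀ t ∈ Set.Ioo (0 : ℝ) b, 0 < h t)
    (hint : 0 < ∫ t in (0 : ℝ)..b, h t) :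
    ∃ γ δ c : ℝ, γ < δ ∧ 0 < c ∧ 0 ≤ γ ∧ γ ≤ x₁ ∧ x₁ ≤ b ∧ b ≤ δ ∧
      c * (δ - x₁) = h x₁ ∧
      (∫ t in γ..δ, (c * (δ - t)) ^ β) = (∫ t in (0 : ℝ)..b, h t ^ β) ∧
      (∫ t in x₁..δ, (c * (δ - t)) ^ β) = (∫ t in x₁..b, h t ^ β) :=
  stmt_16_general b β x₁ h hb hβ hx₁ hconc hnn hsupp
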